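/- arXiv:1504.00238 — 2 statements merged into one kernel-verified Lean document; each statement's English description precedes it below -/
import Mathlib

section
/- Let $T \ge 1$ and for each $t$ let $I_t$ be a $\{0,1\}$-valued random variable, $\epsilon_t$ a real random variable, $A_t$ Bernoulli($\rho_t$), and $Z_t \in \mathbb{R}^p$ fixed. Assume: (i) for each $t$, $A_t$ is independent of $(I_1,\dots,I_T, A_1,\dots,A_{t-1}, \epsilon_1, \dots, \epsilon_{t-1})$; (ii) $E[\epsilon_t \mid I_t = 1, A_t] = 0$; (iii) $E[\epsilon_t^2 \mid I_t = 1, A_t] = \sigma^2$ for all $t, A_t$; (iv) for $s < t$, $E[\epsilon_t \epsilon_s \mid I_t = 1, I_s = 1, A_t, A_s]$ does not depend on $(A_t, A_s)$. Then $W := E\big[ (\sum_t \epsilon_t I_t (A_t - \rho_t) Z_t)(\sum_t \epsilon_t I_t (A_t - \rho_t) Z_t') \big] = \sigma^2 \sum_t E[I_t] \rho_t(1-\rho_t) Z_t Z_t'$. -/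
open MeasureTheory ProbabilityTheory Matrix BigOperators

theorem stmt6 {Ω : Type*} [MeasurableSpace Ω] (μ : Measure Ω) [IsProbabilityMeasure μ]
    {T p : ℕ} (hT : 1 ≤ T)
    (I A ε : Fin T → Ω → ℝ) (ρ : Fin T → ℝ) (Z : Fin T → Fin p → ℝ) (σ : ℝ)
    (hρ : ∀ t, ρ t ∈ Set.Ioo (0:ℝ) 1)
    (hmI : ∀ t, Measurable (I t)) (hmA : ∀ t, Measurable (A t))
    (hmε : ∀ t, Measurable (ε t))
    (hI01 : ∀ t ω, I t ω = 0 ∨ I t ω = 1) (hA01 : ∀ t ω, A t ω = 0 ∨ A t ω = 1)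
    (hBern : ∀ t, μ {ω | A t ω = 1} = ENNReal.ofReal (ρ t))
    (hintg : ∀ s t : Fin T, Integrable (fun ω => ε s ω * ε t ω) μ)
    -- (i): A t is independent of all availability indicators and of past treatments and errors
    (hind : ∀ t, IndepFun (A t)
      (fun ω => ((fun u : Fin T => I u ω),
                 (fun u : {u : Fin T // u < t} => A u.1 ω),
                 (fun u : {u : Fin T // u < t} => ε u.1 ω))) μ)
    -- (ii): E[ε_t | I_t = 1, A_t = a] = 0
    (hcond0 : ∀ t, ∀ a ∈ ({0, 1} : Set ℝ),
      (∫ ω in {ω | I t ω = 1 ∧ A t ω = a}, ε t ω ∂μ) = 0)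
    -- (iii): E[ε_t² | I_t = 1, A_t = a] = σ²
    (hcond2 : ∀ t, ∀ a ∈ ({0, 1} : Set ℝ),
      (∫ ω in {ω | I t ω = 1 ∧ A t ω = a}, (ε t ω) ^ 2 ∂μ)
        = σ ^ 2 * (μ {ω | I t ω = 1 ∧ A t ω = a}).toReal)
    -- (iv): E[ε_t ε_s | I_t = 1, I_s = 1, A_t = a, A_s = b] does not depend on (a, b)
    (hcross : ∀ s t : Fin T, s < t → ∃ c : ℝ,
      ∀ a ∈ ({0, 1} : Set ℝ), ∀ b ∈ ({0, 1} : Set ℝ),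
      (∫ ω in {ω | I t ω = 1 ∧ I s ω = 1 ∧ A t ω = a ∧ A s ω = b}, ε t ω * ε s ω ∂μ)
        = c * (μ {ω | I t ω = 1 ∧ I s ω = 1 ∧ A t ω = a ∧ A s ω = b}).toReal) :
    (Matrix.of fun i j => ∫ ω, (∑ t, ε t ω * I t ω * (A t ω - ρ t) * Z t i)
        * (∑ t, ε t ω * I t ω * (A t ω - ρ t) * Z t j) ∂μ
      : Matrix (Fin p) (Fin p) ℝ)
      = σ ^ 2 • ∑ t, ((∫ ω, I t ω ∂μ) * ρ t * (1 - ρ t)) • Matrix.vecMulVec (Z t) (Z t) := by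
  classical
  -- basic sets
  set S : Fin T → Fin T → ℝ → ℝ → Set Ω :=
    fun s t a b => {ω | I s ω = 1 ∧ I t ω = 1 ∧ A s ω = a ∧ A t ω = b} with hS
  have hSm : ∀ s t a b, MeasurableSet (S s t a b) := by
    intro s t a b
    have : S s t a b = (I s ⁻¹' {1}) ∩ ((I t ⁻¹' {1}) ∩ ((A s ⁻¹' {a}) ∩ (A t ⁻¹' {b}))) := by
      ext ω; simp [hS, Set.mem_setOf_eq]; try tauto
    rw [this]
    exact (hmI s (measurableSet_singleton 1)).inter
      ((hmI t (measurableSet_singleton 1)).inter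
        ((hmA s (measurableSet_singleton a)).inter (hmA t (measurableSet_singleton b))))
  have hSint : ∀ s t a b, Integrable ((S s t a b).indicator (fun ω => ε s ω * ε t ω)) μ :=
    fun s t a b => (hintg s t).indicator (hSm s t a b)
  -- the pointwise decomposition function
  set Q : Fin T → Fin T → Ω → ℝ := fun s t ω =>
    (1 - ρ s) * (1 - ρ t) * (S s t 1 1).indicator (fun ω => ε s ω * ε t ω) ω
    + (1 - ρ s) * (0 - ρ t) * (S s t 1 0).indicator (fun ω => ε s ω * ε t ω) ω
    + (0 - ρ s) * (1 - ρ t) * (S s t 0 1).indicator (fun ω => ε s ω * ε t ω) ω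
    + (0 - ρ s) * (0 - ρ t) * (S s t 0 0).indicator (fun ω => ε s ω * ε t ω) ω with hQ
  have hQint : ∀ s t, Integrable (Q s t) μ := by
    intro s t
    exact ((((hSint s t 1 1).const_mul _).add ((hSint s t 1 0).const_mul _)).add
      ((hSint s t 0 1).const_mul _)).add ((hSint s t 0 0).const_mul _)
  have hpoint : ∀ (s t : Fin T) (i j : Fin p) (ω : Ω),
      (ε s ω * I s ω * (A s ω - ρ s) * Z s i) * (ε t ω * I t ω * (A t ω - ρ t) * Z t j)
        = Z s i * Z t j * Q s t ω := by
    intro s t i j ω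
    rcases hI01 s ω with h1 | h1 <;> rcases hI01 t ω with h2 | h2 <;>
      rcases hA01 s ω with h3 | h3 <;> rcases hA01 t ω with h4 | h4 <;>
      simp [hQ, hS, Set.indicator_apply, Set.mem_setOf_eq, h1, h2, h3, h4] <;> ring
  -- expansion of the integral of Q
  have hQval : ∀ s t, ∫ ω, Q s t ω ∂μ =
      (1 - ρ s) * (1 - ρ t) * ∫ ω in S s t 1 1, ε s ω * ε t ω ∂μ
      + (1 - ρ s) * (0 - ρ t) * ∫ ω in S s t 1 0, ε s ω * ε t ω ∂μ
      + (0 - ρ s) * (1 - ρ t) * ∫ ω in S s t 0 1, ε s ω * ε t ω ∂μ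
      + (0 - ρ s) * (0 - ρ t) * ∫ ω in S s t 0 0, ε s ω * ε t ω ∂μ := by
    intro s t
    have i11 := (hSint s t 1 1).const_mul ((1 - ρ s) * (1 - ρ t))
    have i10 := (hSint s t 1 0).const_mul ((1 - ρ s) * (0 - ρ t))
    have i01 := (hSint s t 0 1).const_mul ((0 - ρ s) * (1 - ρ t))
    have i00 := (hSint s t 0 0).const_mul ((0 - ρ s) * (0 - ρ t))
    simp only [hQ]
    have e1 : ∫ ω, ((1 - ρ s) * (1 - ρ t) * (S s t 1 1).indicator (fun ω => ε s ω * ε t ω) ω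
        + (1 - ρ s) * (0 - ρ t) * (S s t 1 0).indicator (fun ω => ε s ω * ε t ω) ω
        + (0 - ρ s) * (1 - ρ t) * (S s t 0 1).indicator (fun ω => ε s ω * ε t ω) ω
        + (0 - ρ s) * (0 - ρ t) * (S s t 0 0).indicator (fun ω => ε s ω * ε t ω) ω) ∂μ
        = (∫ ω, ((1 - ρ s) * (1 - ρ t) * (S s t 1 1).indicator (fun ω => ε s ω * ε t ω) ω) ∂μ)
        + (∫ ω, ((1 - ρ s) * (0 - ρ t) * (S s t 1 0).indicator (fun ω => ε s ω * ε t ω) ω) ∂μ)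
        + (∫ ω, ((0 - ρ s) * (1 - ρ t) * (S s t 0 1).indicator (fun ω => ε s ω * ε t ω) ω) ∂μ)
        + (∫ ω, ((0 - ρ s) * (0 - ρ t) * (S s t 0 0).indicator (fun ω => ε s ω * ε t ω) ω) ∂μ) := by
      rw [show (∫ ω, ((1 - ρ s) * (1 - ρ t) * (S s t 1 1).indicator (fun ω => ε s ω * ε t ω) ω
        + (1 - ρ s) * (0 - ρ t) * (S s t 1 0).indicator (fun ω => ε s ω * ε t ω) ω
        + (0 - ρ s) * (1 - ρ t) * (S s t 0 1).indicator (fun ω => ε s ω * ε t ω) ω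
        + (0 - ρ s) * (0 - ρ t) * (S s t 0 0).indicator (fun ω => ε s ω * ε t ω) ω) ∂μ)
        = (∫ ω, ((1 - ρ s) * (1 - ρ t) * (S s t 1 1).indicator (fun ω => ε s ω * ε t ω) ω
        + (1 - ρ s) * (0 - ρ t) * (S s t 1 0).indicator (fun ω => ε s ω * ε t ω) ω
        + (0 - ρ s) * (1 - ρ t) * (S s t 0 1).indicator (fun ω => ε s ω * ε t ω) ω) ∂μ)
        + (∫ ω, ((0 - ρ s) * (0 - ρ t) * (S s t 0 0).indicator (fun ω => ε s ω * ε t ω) ω) ∂μ)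
        from integral_add ((i11.add i10).add i01) i00]
      rw [show (∫ ω, ((1 - ρ s) * (1 - ρ t) * (S s t 1 1).indicator (fun ω => ε s ω * ε t ω) ω
        + (1 - ρ s) * (0 - ρ t) * (S s t 1 0).indicator (fun ω => ε s ω * ε t ω) ω
        + (0 - ρ s) * (1 - ρ t) * (S s t 0 1).indicator (fun ω => ε s ω * ε t ω) ω) ∂μ)
        = (∫ ω, ((1 - ρ s) * (1 - ρ t) * (S s t 1 1).indicator (fun ω => ε s ω * ε t ω) ω
        + (1 - ρ s) * (0 - ρ t) * (S s t 1 0).indicator (fun ω => ε s ω * ε t ω) ω) ∂μ)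
        + (∫ ω, ((0 - ρ s) * (1 - ρ t) * (S s t 0 1).indicator (fun ω => ε s ω * ε t ω) ω) ∂μ)
        from integral_add (i11.add i10) i01]
      rw [show (∫ ω, ((1 - ρ s) * (1 - ρ t) * (S s t 1 1).indicator (fun ω => ε s ω * ε t ω) ω
        + (1 - ρ s) * (0 - ρ t) * (S s t 1 0).indicator (fun ω => ε s ω * ε t ω) ω) ∂μ)
        = (∫ ω, ((1 - ρ s) * (1 - ρ t) * (S s t 1 1).indicator (fun ω => ε s ω * ε t ω) ω) ∂μ)
        + (∫ ω, ((1 - ρ s) * (0 - ρ t) * (S s t 1 0).indicator (fun ω => ε s ω * ε t ω) ω) ∂μ)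
        from integral_add i11 i10]
    rw [e1, integral_const_mul, integral_const_mul, integral_const_mul, integral_const_mul,
      integral_indicator (hSm s t 1 1), integral_indicator (hSm s t 1 0),
      integral_indicator (hSm s t 0 1), integral_indicator (hSm s t 0 0)]
  -- measures of A-level sets
  have hA1 : ∀ t, μ (A t ⁻¹' {1}) = ENNReal.ofReal (ρ t) := fun t => hBern t
  have hA0 : ∀ t, μ (A t ⁻¹' {0}) = ENNReal.ofReal (1 - ρ t) := by
    intro t
    have hc : A t ⁻¹' {0} = (A t ⁻¹' {1})ᶜ := by
      ext ω; rcases hA01 t ω with h | h <;> simp [h]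
    rw [hc, measure_compl (hmA t (measurableSet_singleton 1)) (measure_ne_top _ _),
      measure_univ, hA1 t, ← ENNReal.ofReal_one,
      ← ENNReal.ofReal_sub _ (le_of_lt (hρ t).1)]
  have hA1r : ∀ t, (μ (A t ⁻¹' {1})).toReal = ρ t := fun t => by
    rw [hA1]; exact ENNReal.toReal_ofReal (le_of_lt (hρ t).1)
  have hA0r : ∀ t, (μ (A t ⁻¹' {0})).toReal = 1 - ρ t := fun t => by
    rw [hA0]; exact ENNReal.toReal_ofReal (by linarith [(hρ t).2])
  -- independence: A t ⊥ I t
  have hIndep1 : ∀ t, IndepFun (A t) (I t) μ := by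
    intro t
    exact (hind t).comp measurable_id ((measurable_pi_apply t).comp measurable_fst)
  have hmu_diag : ∀ t a, μ {ω | I t ω = 1 ∧ A t ω = a}
      = μ (A t ⁻¹' {a}) * μ (I t ⁻¹' {1}) := by
    intro t a
    have h := (hIndep1 t).measure_inter_preimage_eq_mul {a} {1}
      (measurableSet_singleton a) (measurableSet_singleton 1)
    have hset : {ω | I t ω = 1 ∧ A t ω = a} = A t ⁻¹' {a} ∩ I t ⁻¹' {1} := by
      ext ω; simp [Set.mem_setOf_eq]; try tauto
    rw [hset, h]
  -- independence factorization for s < t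
  have hfact : ∀ (s t : Fin T), s < t → ∀ a b : ℝ,
      μ (S s t a b) = μ (A t ⁻¹' {b}) * μ {ω | I s ω = 1 ∧ I t ω = 1 ∧ A s ω = a} := by
    intro s t hst a b
    have hψ : Measurable (fun x : (Fin T → ℝ) × ({u : Fin T // u < t} → ℝ)
        × ({u : Fin T // u < t} → ℝ) => (x.1 s, x.1 t, x.2.1 ⟨s, hst⟩)) :=
      ((measurable_pi_apply s).comp measurable_fst).prod
        (((measurable_pi_apply t).comp measurable_fst).prod
          ((measurable_pi_apply (⟨s, hst⟩ : {u : Fin T // u < t})).comp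
            (measurable_fst.comp measurable_snd)))
    have hind' := (hind t).comp measurable_id hψ
    have h := hind'.measure_inter_preimage_eq_mul {b} ({1} ×ˢ {1} ×ˢ {a})
      (measurableSet_singleton b)
      ((measurableSet_singleton 1).prod
        ((measurableSet_singleton 1).prod (measurableSet_singleton a)))
    have e2 : ((fun x : (Fin T → ℝ) × ({u : Fin T // u < t} → ℝ)
        × ({u : Fin T // u < t} → ℝ) => (x.1 s, x.1 t, x.2.1 ⟨s, hst⟩)) ∘
        (fun ω => ((fun u : Fin T => I u ω),
                 (fun u : {u : Fin T // u < t} => A u.1 ω),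
                 (fun u : {u : Fin T // u < t} => ε u.1 ω)))) ⁻¹' ({1} ×ˢ {1} ×ˢ {a})
        = {ω | I s ω = 1 ∧ I t ω = 1 ∧ A s ω = a} := by
      ext ω; simp [Set.mem_preimage, Function.comp, Set.mem_prod]
    have e3 : S s t a b = (id ∘ A t) ⁻¹' {b} ∩ ((fun x : (Fin T → ℝ)
        × ({u : Fin T // u < t} → ℝ) × ({u : Fin T // u < t} → ℝ) =>
        (x.1 s, x.1 t, x.2.1 ⟨s, hst⟩)) ∘
        (fun ω => ((fun u : Fin T => I u ω),
                 (fun u : {u : Fin T // u < t} => A u.1 ω),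
                 (fun u : {u : Fin T // u < t} => ε u.1 ω)))) ⁻¹' ({1} ×ˢ {1} ×ˢ {a}) := by
      rw [e2]; ext ω; simp [hS, Set.mem_setOf_eq]; try tauto
    rw [e3, h, e2]
    rfl
  -- expectation of I t
  have hEI : ∀ t, ∫ ω, I t ω ∂μ = (μ (I t ⁻¹' {1})).toReal := by
    intro t
    have heq : (fun ω => I t ω) =ᵐ[μ] fun ω => (I t ⁻¹' {1}).indicator (fun _ => (1:ℝ)) ω :=
      Filter.Eventually.of_forall fun ω => by
        rcases hI01 t ω with h | h <;> simp [Set.indicator_apply, h]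
    rw [integral_congr_ae heq, integral_indicator_const _ (hmI t (measurableSet_singleton 1)),
      smul_eq_mul, mul_one]
    rfl
  set D : Fin T → ℝ := fun t => σ ^ 2 * ((∫ ω, I t ω ∂μ) * ρ t * (1 - ρ t)) with hD
  -- evaluation of ∫ Q
  have hQeval : ∀ s t, ∫ ω, Q s t ω ∂μ = if s = t then D s else 0 := by
    intro s t
    rcases lt_trichotomy s t with hst | hst | hst
    · -- s < t : cross term, zero
      rw [if_neg (ne_of_lt hst)]
      obtain ⟨c, hc⟩ := hcross s t hst
      have hval : ∀ a b : ℝ, a ∈ ({0, 1} : Set ℝ) → b ∈ ({0, 1} : Set ℝ) →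
          ∫ ω in S s t a b, ε s ω * ε t ω ∂μ = c * (μ (S s t a b)).toReal := by
        intro a b ha hb
        have hset : {ω | I t ω = 1 ∧ I s ω = 1 ∧ A t ω = b ∧ A s ω = a} = S s t a b := by
          ext ω; simp [hS, Set.mem_setOf_eq]; try tauto
        have hcomm : (fun ω => ε s ω * ε t ω) = fun ω => ε t ω * ε s ω :=
          funext fun ω => mul_comm _ _
        rw [hcomm, ← hset, hc b hb a ha]
      rw [hQval s t, hval 1 1 (by norm_num) (by norm_num), hval 1 0 (by norm_num) (by norm_num),
        hval 0 1 (by norm_num) (by norm_num), hval 0 0 (by norm_num) (by norm_num),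
        hfact s t hst 1 1, hfact s t hst 1 0, hfact s t hst 0 1, hfact s t hst 0 0,
        ENNReal.toReal_mul, ENNReal.toReal_mul, ENNReal.toReal_mul, ENNReal.toReal_mul,
        hA1r t, hA0r t]
      ring
    · -- s = t : diagonal term
      subst hst
      rw [if_pos rfl]
      have h10 : S s s 1 0 = ∅ := by
        ext ω; simp only [hS, Set.mem_setOf_eq, Set.mem_empty_iff_false, iff_false]
        rintro ⟨-, -, h3, h4⟩; rw [h3] at h4; exact one_ne_zero h4
      have h01 : S s s 0 1 = ∅ := by
        ext ω; simp only [hS, Set.mem_setOf_eq, Set.mem_empty_iff_false, iff_false]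
        rintro ⟨-, -, h3, h4⟩; rw [h3] at h4; exact zero_ne_one h4
      have h11 : S s s 1 1 = {ω | I s ω = 1 ∧ A s ω = 1} := by
        ext ω; simp [hS, Set.mem_setOf_eq]; try tauto
      have h00 : S s s 0 0 = {ω | I s ω = 1 ∧ A s ω = 0} := by
        ext ω; simp [hS, Set.mem_setOf_eq]; try tauto
      have hsq : ∀ (U : Set Ω), ∫ ω in U, ε s ω * ε s ω ∂μ = ∫ ω in U, (ε s ω) ^ 2 ∂μ := by
        intro U; apply integral_congr_ae; exact Filter.Eventually.of_forall fun ω => by ring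
      rw [hQval s s, h10, h01, h11, h00]
      simp only [hsq]
      simp only [Measure.restrict_empty, integral_zero_measure]
      rw [hcond2 s 1 (by norm_num), hcond2 s 0 (by norm_num), hmu_diag s 1, hmu_diag s 0,
        ENNReal.toReal_mul, ENNReal.toReal_mul, hA1r s, hA0r s]
      simp only [hD, hEI s]
      ring
    · -- t < s : cross term, zero
      rw [if_neg (ne_of_gt hst)]
      obtain ⟨c, hc⟩ := hcross t s hst
      have hval : ∀ a b : ℝ, a ∈ ({0, 1} : Set ℝ) → b ∈ ({0, 1} : Set ℝ) →
          ∫ ω in S s t a b, ε s ω * ε t ω ∂μ = c * (μ (S s t a b)).toReal := by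
        intro a b ha hb
        exact hc a ha b hb
      have hswap : ∀ a b : ℝ, S s t a b = S t s b a := by
        intro a b; ext ω; simp [hS, Set.mem_setOf_eq]; try tauto
      rw [hQval s t, hval 1 1 (by norm_num) (by norm_num), hval 1 0 (by norm_num) (by norm_num),
        hval 0 1 (by norm_num) (by norm_num), hval 0 0 (by norm_num) (by norm_num),
        hswap 1 1, hswap 1 0, hswap 0 1, hswap 0 0,
        hfact t s hst 1 1, hfact t s hst 0 1, hfact t s hst 1 0, hfact t s hst 0 0,
        ENNReal.toReal_mul, ENNReal.toReal_mul, ENNReal.toReal_mul, ENNReal.toReal_mul,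
        hA1r s, hA0r s]
      ring
  -- main computation
  ext i j
  have hexp : (fun ω => (∑ t, ε t ω * I t ω * (A t ω - ρ t) * Z t i)
      * (∑ t, ε t ω * I t ω * (A t ω - ρ t) * Z t j))
      = fun ω => ∑ s, ∑ t, Z s i * Z t j * Q s t ω := by
    funext ω
    rw [Finset.sum_mul_sum]
    exact Finset.sum_congr rfl fun s _ => Finset.sum_congr rfl fun t _ => hpoint s t i j ω
  have hlhs : ∫ ω, (∑ t, ε t ω * I t ω * (A t ω - ρ t) * Z t i)
      * (∑ t, ε t ω * I t ω * (A t ω - ρ t) * Z t j) ∂μ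
      = ∑ s, ∑ t, Z s i * Z t j * ∫ ω, Q s t ω ∂μ := by
    rw [hexp, integral_finset_sum _ (fun s _ =>
      integrable_finset_sum _ (fun t _ => (hQint s t).const_mul _))]
    refine Finset.sum_congr rfl fun s _ => ?_
    rw [integral_finset_sum _ (fun t _ => (hQint s t).const_mul _)]
    exact Finset.sum_congr rfl fun t _ => integral_const_mul _ _
  simp only [Matrix.of_apply, Matrix.smul_apply, Matrix.sum_apply, Matrix.vecMulVec_apply,
    smul_eq_mul, Pi.smul_apply]
  rw [hlhs]
  have : ∀ s : Fin T, ∑ t, Z s i * Z t j * ∫ ω, Q s t ω ∂μ = Z s i * Z s j * D s := by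
    intro s
    rw [Finset.sum_eq_single s]
    · rw [hQeval s s, if_pos rfl]
    · intro t _ hts; rw [hQeval s t, if_neg (Ne.symm hts), mul_zero]
    · intro h; exact absurd (Finset.mem_univ s) h
  rw [Finset.sum_congr rfl fun s _ => this s, Finset.mul_sum]
  refine Finset.sum_congr rfl fun t _ => ?_
  simp only [hD]
  ring
end

section
/- Let $Y$ be an integrable real random variable, $I$ a $\{0,1\}$-valued random variable with $P(I=1) > 0$, and $A$ a Bernoulli($\rho$) random variable with $\rho \in (0,1)$ independent of $I$, such that $P(I=1, A=1)>0$ and $P(I=1,A=0)>0$. Then $E[I\,Y (A-\rho)] = P(I=1)\rho(1-\rho)\big( E[Y \mid I=1, A=1] - E[Y \mid I=1, A=0] \big)$. -/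
open MeasureTheory ProbabilityTheory

theorem stmt8 {Ω : Type*} [MeasurableSpace Ω] (μ : Measure Ω) [IsProbabilityMeasure μ]
    (Y I A : Ω → ℝ) (ρ : ℝ) (hρ : ρ ∈ Set.Ioo (0:ℝ) 1)
    (hY : Integrable Y μ) (hmI : Measurable I) (hmA : Measurable A)
    (hI01 : ∀ ω, I ω = 0 ∨ I ω = 1) (hA01 : ∀ ω, A ω = 0 ∨ A ω = 1)
    (hAρ : μ {ω | A ω = 1} = ENNReal.ofReal ρ)
    (hind : IndepFun A I μ)
    (hpos : 0 < μ {ω | I ω = 1})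
    (hpos1 : 0 < μ {ω | I ω = 1 ∧ A ω = 1})
    (hpos0 : 0 < μ {ω | I ω = 1 ∧ A ω = 0}) :
    (∫ ω, I ω * Y ω * (A ω - ρ) ∂μ)
      = (μ {ω | I ω = 1}).toReal * ρ * (1 - ρ) *
        ((∫ ω in {ω | I ω = 1 ∧ A ω = 1}, Y ω ∂μ) / (μ {ω | I ω = 1 ∧ A ω = 1}).toReal
         - (∫ ω in {ω | I ω = 1 ∧ A ω = 0}, Y ω ∂μ) / (μ {ω | I ω = 1 ∧ A ω = 0}).toReal) := by
  obtain ⟨hρ0, hρ1⟩ := hρ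
  set S1 : Set Ω := {ω | I ω = 1 ∧ A ω = 1} with hS1def
  set S0 : Set Ω := {ω | I ω = 1 ∧ A ω = 0} with hS0def
  have hset1 : S1 = I ⁻¹' {1} ∩ A ⁻¹' {1} := rfl
  have hset0 : S0 = I ⁻¹' {1} ∩ A ⁻¹' {0} := rfl
  have hmS1 : MeasurableSet S1 := by
    rw [hset1]; exact (hmI (measurableSet_singleton 1)).inter (hmA (measurableSet_singleton 1))
  have hmS0 : MeasurableSet S0 := by
    rw [hset0]; exact (hmI (measurableSet_singleton 1)).inter (hmA (measurableSet_singleton 0))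
  have hAρ' : μ (A ⁻¹' {1}) = ENNReal.ofReal ρ := hAρ
  have hIeq : μ (I ⁻¹' {1}) = μ {ω | I ω = 1} := rfl
  have hA0 : (A ⁻¹' {0} : Set Ω) = (A ⁻¹' {1})ᶜ := by
    ext ω
    simp only [Set.mem_preimage, Set.mem_singleton_iff, Set.mem_compl_iff]
    rcases hA01 ω with h | h <;> simp [h]
  have hμA0 : μ (A ⁻¹' {0}) = ENNReal.ofReal (1 - ρ) := by
    rw [hA0, measure_compl (hmA (measurableSet_singleton 1)) (measure_ne_top μ _), hAρ',
      measure_univ, ENNReal.ofReal_sub 1 hρ0.le, ENNReal.ofReal_one]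
  have hμS1 : μ S1 = μ {ω | I ω = 1} * ENNReal.ofReal ρ := by
    have h := hind.symm.measure_inter_preimage_eq_mul ({1} : Set ℝ) ({1} : Set ℝ)
      (measurableSet_singleton 1) (measurableSet_singleton 1)
    rw [hset1, h, hAρ', hIeq]
  have hμS0 : μ S0 = μ {ω | I ω = 1} * ENNReal.ofReal (1 - ρ) := by
    have h := hind.symm.measure_inter_preimage_eq_mul ({1} : Set ℝ) ({0} : Set ℝ)
      (measurableSet_singleton 1) (measurableSet_singleton 0)
    rw [hset0, h, hμA0, hIeq]
  set p : ℝ := (μ {ω | I ω = 1}).toReal with hpdef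
  have hp : 0 < p := ENNReal.toReal_pos hpos.ne' (measure_ne_top μ _)
  have htS1 : (μ S1).toReal = p * ρ := by
    rw [hμS1, ENNReal.toReal_mul, ENNReal.toReal_ofReal hρ0.le]
  have htS0 : (μ S0).toReal = p * (1 - ρ) := by
    rw [hμS0, ENNReal.toReal_mul, ENNReal.toReal_ofReal (by linarith)]
  have hfun : ∀ ω, I ω * Y ω * (A ω - ρ)
      = (1 - ρ) * S1.indicator Y ω - ρ * S0.indicator Y ω := by
    intro ω
    rcases hI01 ω with hI | hI <;> rcases hA01 ω with hA | hA <;>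
      simp [hS1def, hS0def, Set.indicator_apply, Set.mem_setOf_eq, hI, hA] <;> ring
  have hint1 : Integrable (fun ω => (1 - ρ) * S1.indicator Y ω) μ :=
    (hY.indicator hmS1).const_mul _
  have hint0 : Integrable (fun ω => ρ * S0.indicator Y ω) μ :=
    (hY.indicator hmS0).const_mul _
  have hL : (∫ ω, I ω * Y ω * (A ω - ρ) ∂μ)
      = (1 - ρ) * ∫ ω in S1, Y ω ∂μ - ρ * ∫ ω in S0, Y ω ∂μ := by
    rw [integral_congr_ae (Filter.Eventually.of_forall hfun), integral_sub hint1 hint0,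
      integral_const_mul, integral_const_mul, integral_indicator hmS1, integral_indicator hmS0]
  rw [hL, htS1, htS0]
  have h1ρ : (0:ℝ) < 1 - ρ := by linarith
  field_simp
end
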